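/- Let K ≥ 2, N ≥ 1, x : {1,…,N} → {1,…,K} with every category nonempty, and let u ∈ Δ^N have all coordinates strictly positive. Then F(u) equals the intersection of Δ with the sets {θ ∈ ℝ^K : θ_ℓ ≤ η_{k→ℓ}(u) · θ_k} over all k, ℓ ∈ {1,…,K}; in particular F(u) is a compact convex subset of Δ defined by finitely many linear inequalities. -/

import Mathlib

noncomputable section

/-- The `ℓ`-th vertex of the probability simplex in `ℝ^K` (standard basis vector). -/
def vtx (K : ℕ) (ℓ : Fin K) : Fin K → ℝ := fun i => if i = ℓ then 1 else 0

/-- The subsimplex `Δ_k(θ)`: convex hull of `{θ} ∪ {V_ℓ : ℓ ≠ k}`. -/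
def subsimplex (K : ℕ) (k : Fin K) (θ : Fin K → ℝ) : Set (Fin K → ℝ) :=
  convexHull ℝ (insert θ {z | ∃ ℓ : Fin K, ℓ ≠ k ∧ z = vtx K ℓ})

/-!
For `θ, u ∈ Δ` with `u_k > 0`, membership `u ∈ Δ_k(θ)` amounts to `θ_ℓ / θ_k ≤ u_ℓ / u_k` for
all `ℓ`. The inequality `θ_ℓ v_k ≤ θ_k v_ℓ` is linear in `v` and holds at `θ` and at every
`V_ℓ` with `ℓ ≠ k`, hence on their convex hull. Conversely, with `t = u_k / θ_k`, the
coefficients `u_ℓ - t θ_ℓ` are nonnegative, sum to `1 - t` and vanish at `k`, so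
`u = t θ + ∑_ℓ (u_ℓ - t θ_ℓ) V_ℓ` is a convex combination of `θ` and the `V_ℓ`, `ℓ ≠ k`.
Taking the minimum over `n ∈ I_k` turns the conditions for all `u_n` into `θ_ℓ ≤ η_{k→ℓ} θ_k`.
-/

lemma sum_smul_vtx {K : ℕ} (c : Fin K → ℝ) : ∑ ℓ, c ℓ • vtx K ℓ = c := by
  ext i
  simp [vtx, Finset.sum_apply]

lemma convex_setOf_mul_apply_le_mul_apply {ι : Type*} (a b : ℝ) (i j : ι) :
    Convex ℝ {v : ι → ℝ | a * v i ≤ b * v j} := by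
  have hlin : IsLinearMap ℝ fun v : ι → ℝ => a * v i - b * v j :=
    ⟨fun v w => by simp only [Pi.add_apply]; ring,
      fun c v => by simp only [Pi.smul_apply, smul_eq_mul]; ring⟩
  simpa only [sub_nonpos] using convex_halfSpace_le hlin 0

lemma subsimplex_subset {K : ℕ} {k : Fin K} {θ : Fin K → ℝ} (hθk : 0 ≤ θ k) :
    subsimplex K k θ ⊆ ⋂ ℓ, {v | θ ℓ * v k ≤ θ k * v ℓ} := by
  refine convexHull_min ?_ (convex_iInter fun ℓ => convex_setOf_mul_apply_le_mul_apply _ _ _ _)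
  rintro v (rfl | ⟨ℓ', hℓ'k, rfl⟩) <;> simp only [Set.mem_iInter, Set.mem_ofPred_eq] <;> intro ℓ
  · rw [mul_comm]
  · simp only [vtx, if_neg hℓ'k.symm, mul_zero]
    split_ifs <;> linarith

lemma mem_subsimplex_of_forall {K : ℕ} {k : Fin K} {θ u : Fin K → ℝ}
    (hθ : θ ∈ stdSimplex ℝ (Fin K)) (hu : u ∈ stdSimplex ℝ (Fin K)) (huk : 0 < u k)
    (h : ∀ ℓ, θ ℓ * u k ≤ θ k * u ℓ) : u ∈ subsimplex K k θ := by
  have hukθk : u k ≤ θ k := by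
    have := Finset.sum_le_sum fun ℓ (_ : ℓ ∈ Finset.univ) => h ℓ
    rwa [← Finset.sum_mul, ← Finset.mul_sum, hθ.2, hu.2, one_mul, mul_one] at this
  have hθk : 0 < θ k := huk.trans_le hukθk
  set t := u k / θ k
  have ht : 0 ≤ t := by positivity
  set c : Fin K → ℝ := fun ℓ => u ℓ - t * θ ℓ
  have hc : ∀ ℓ, 0 ≤ c ℓ := fun ℓ => by
    have : t * θ ℓ ≤ u ℓ := by
      rw [div_mul_eq_mul_div, div_le_iff₀ hθk]
      linarith [h ℓ]
    simp only [c]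
    linarith
  have hck : c k = 0 := by simp [c, t, hθk.ne']
  have hc_sum : ∑ ℓ, c ℓ = 1 - t := by
    simp only [c, Finset.sum_sub_distrib, ← Finset.mul_sum, hθ.2, hu.2, mul_one]
  -- `u = t • θ + ∑ ℓ, c ℓ • V_ℓ`; since `c k = 0`, the slot of `V_k` can be given to `θ`.
  set w : Fin K → ℝ := fun ℓ => c ℓ + if ℓ = k then t else 0
  set z : Fin K → Fin K → ℝ := fun ℓ => if ℓ = k then θ else vtx K ℓ
  have hu_eq : ∑ ℓ, w ℓ • z ℓ = u := by
    have hcz : ∑ ℓ, c ℓ • z ℓ = c := by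
      refine (Finset.sum_congr rfl fun ℓ _ => ?_).trans (sum_smul_vtx c)
      by_cases hℓ : ℓ = k
      · simp [hℓ, hck]
      · simp [z, hℓ]
    simp only [w, add_smul, Finset.sum_add_distrib, hcz, ite_smul, zero_smul,
      Finset.sum_ite_eq', Finset.mem_univ, if_true, z]
    ext i
    simp [c]
  rw [← hu_eq]
  refine (convex_convexHull ℝ _).sum_mem (fun ℓ _ => ?_) ?_ (fun ℓ _ => subset_convexHull ℝ _ ?_)
  · simp only [w]
    split_ifs <;> linarith [hc ℓ]
  · simp only [w, Finset.sum_add_distrib, hc_sum, Finset.sum_ite_eq', Finset.mem_univ, if_true]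
    ring
  · by_cases hℓ : ℓ = k
    · simp [z, hℓ]
    · exact Or.inr ⟨ℓ, hℓ, by simp [z, hℓ]⟩

lemma mem_subsimplex_iff {K : ℕ} {k : Fin K} {θ u : Fin K → ℝ}
    (hθ : θ ∈ stdSimplex ℝ (Fin K)) (hu : u ∈ stdSimplex ℝ (Fin K)) (huk : 0 < u k) :
    u ∈ subsimplex K k θ ↔ ∀ ℓ, θ ℓ ≤ u ℓ / u k * θ k := by
  have hratio : ∀ ℓ, θ ℓ ≤ u ℓ / u k * θ k ↔ θ ℓ * u k ≤ θ k * u ℓ := fun ℓ => by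
    rw [div_mul_eq_mul_div, le_div_iff₀ huk, mul_comm (θ k)]
  simp only [hratio]
  exact ⟨fun h => Set.mem_iInter.mp (subsimplex_subset (hθ.1 k) h),
    mem_subsimplex_of_forall hθ hu huk⟩

lemma IsLeast.le_mul_iff_forall {α : Type*} [Mul α] [Zero α] [Preorder α] [MulPosMono α]
    {s : Set α} {a b c : α} (ha : IsLeast s a) (hc : 0 ≤ c) :
    b ≤ a * c ↔ ∀ v ∈ s, b ≤ v * c :=
  ⟨fun h _ hv => h.trans (mul_le_mul_of_nonneg_right (ha.2 hv) hc), fun h => h a ha.1⟩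

theorem stmt12 (K N : ℕ)
    (x : Fin N → Fin K)
    (u : Fin N → Fin K → ℝ) (hu : ∀ n, u n ∈ stdSimplex ℝ (Fin K))
    (hupos : ∀ n ℓ, 0 < u n ℓ)
    (η : Fin K → Fin K → ℝ)
    (hη : ∀ k ℓ, IsLeast {v : ℝ | ∃ n, x n = k ∧ v = u n ℓ / u n k} (η k ℓ)) :
    ({θ ∈ stdSimplex ℝ (Fin K) | ∀ n, u n ∈ subsimplex K (x n) θ} =
      stdSimplex ℝ (Fin K) ∩
        ⋂ (k : Fin K) (ℓ : Fin K), {θ : Fin K → ℝ | θ ℓ ≤ η k ℓ * θ k}) ∧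
    IsCompact {θ ∈ stdSimplex ℝ (Fin K) | ∀ n, u n ∈ subsimplex K (x n) θ} ∧
    Convex ℝ {θ ∈ stdSimplex ℝ (Fin K) | ∀ n, u n ∈ subsimplex K (x n) θ} := by
  have hF : {θ ∈ stdSimplex ℝ (Fin K) | ∀ n, u n ∈ subsimplex K (x n) θ} =
      stdSimplex ℝ (Fin K) ∩ ⋂ (k : Fin K) (ℓ : Fin K), {θ : Fin K → ℝ | θ ℓ ≤ η k ℓ * θ k} := by
    ext θ
    simp only [Set.mem_ofPred_eq, Set.mem_inter_iff, Set.mem_iInter]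
    refine and_congr_right fun hθ => ?_
    simp only [mem_subsimplex_iff hθ (hu _) (hupos _ _), (hη _ _).le_mul_iff_forall (hθ.1 _)]
    constructor
    · rintro h k ℓ _ ⟨n, rfl, rfl⟩
      exact h n ℓ
    · exact fun h n ℓ => h _ ℓ _ ⟨n, rfl, rfl⟩
  refine ⟨hF, ?_, ?_⟩ <;> rw [hF]
  · exact (isCompact_stdSimplex ℝ (Fin K)).inter_right <| isClosed_iInter fun k =>
      isClosed_iInter fun ℓ => isClosed_le (continuous_apply ℓ) (by fun_prop)
  · exact (convex_stdSimplex ℝ (Fin K)).inter <| convex_iInter fun k =>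
      convex_iInter fun ℓ => by simpa using convex_setOf_mul_apply_le_mul_apply 1 (η k ℓ) ℓ k
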